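/- arXiv:1104.3314 — 3 statements merged into one kernel-verified Lean document; each statement's English description precedes it below -/
import Mathlib

section
/- If A and B are nontrivial automata (each with more than one state) over the same alphabet and there exists an automaton homomorphism from A to B, then the direct product automaton A × B is not strongly connected. -/
/-- Extended transition function of an automaton: the action of a word on a state. -/
def run {S Alph : Type*} (δ : S → Alph → S) (s : S) (x : List Alph) : S :=
  x.foldl δ s

/-- Single-letter transition of the direct product automaton. -/
def prodStep {S T Alph : Type*} (δ : S → Alph → S) (γ : T → Alph → T) :
    S × T → Alph → S × T :=
  fun p a => (δ p.1 a, γ p.2 a)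

/-- An automaton is strongly connected if every state reaches every state. -/
def StronglyConnected {S Alph : Type*} (δ : S → Alph → S) : Prop :=
  ∀ s t : S, ∃ x : List Alph, run δ s x = t

/-- A word is a reset input function if it sends every state to one fixed state. -/
def IsReset {S Alph : Type*} (δ : S → Alph → S) (x : List Alph) : Prop :=
  ∃ t : S, ∀ s : S, run δ s x = t

/-- A synchronizing automaton has at least one reset input function. -/
def Synchronizing {S Alph : Type*} (δ : S → Alph → S) : Prop :=
  ∃ x : List Alph, IsReset δ x

/-- A permutation automaton: every input word acts bijectively on the states. -/
def PermutationAut {S Alph : Type*} (δ : S → Alph → S) : Prop :=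
  ∀ x : List Alph, Function.Bijective (fun s : S => run δ s x)

/-- The range `Im_A(x)` of the input function given by the word `x`. -/
def Im {S Alph : Type*} (δ : S → Alph → S) (x : List Alph) : Set S :=
  Set.range fun s : S => run δ s x

/-- The rank of a word: cardinality of its range. -/
noncomputable def wordRank {S Alph : Type*} (δ : S → Alph → S) (x : List Alph) : ℕ :=
  (Im δ x).ncard

/-- `[x]_A` lies in the minimal ideal `I(A)` of the transition semigroup:
`x` is a nonempty word of minimal rank among nonempty words. -/
def InMinIdeal {S Alph : Type*} (δ : S → Alph → S) (x : List Alph) : Prop :=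
  x ≠ [] ∧ ∀ y : List Alph, y ≠ [] → wordRank δ x ≤ wordRank δ y

/-- `x ≡_A y` : the words `x` and `y` act equally on every state. -/
def ActEq {S Alph : Type*} (δ : S → Alph → S) (x y : List Alph) : Prop :=
  ∀ s : S, run δ s x = run δ s y

/-- `[e]_A` is an idempotent element of the minimal ideal `I(A)`. -/
def IdemMin {S Alph : Type*} (δ : S → Alph → S) (e : List Alph) : Prop :=
  InMinIdeal δ e ∧ ActEq δ (e ++ e) e

/-- The minimal ideal `I(A)` is right simple: for all `a, b ∈ I(A)` there is
`c ∈ I(A)` with `ac = b`. -/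
def RightSimpleMin {S Alph : Type*} (δ : S → Alph → S) : Prop :=
  ∀ a b : List Alph, InMinIdeal δ a → InMinIdeal δ b →
    ∃ c : List Alph, InMinIdeal δ c ∧ ActEq δ (a ++ c) b

/-- The minimal ideal `I(A)` is a right group: right simple with an idempotent. -/
def RightGroupMin {S Alph : Type*} (δ : S → Alph → S) : Prop :=
  RightSimpleMin δ ∧ ∃ e : List Alph, IdemMin δ e

/-- The ranges of the idempotents of `I(A)` form a partition of the state set. -/
def IdemPartition {S Alph : Type*} (δ : S → Alph → S) : Prop :=
  (∀ s : S, ∃ e : List Alph, IdemMin δ e ∧ s ∈ Im δ e) ∧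
  ∀ e f : List Alph, IdemMin δ e → IdemMin δ f →
    Im δ e ∩ Im δ f = ∅ ∨ Im δ e = Im δ f

/-- A quasi-ideal automaton. -/
def QuasiIdeal {S Alph : Type*} (δ : S → Alph → S) : Prop :=
  StronglyConnected δ ∧ RightGroupMin δ ∧ IdemPartition δ

/-- An automaton congruence: an equivalence relation on states compatible with
the action of every word. -/
def AutCongruence {S Alph : Type*} (δ : S → Alph → S) (r : S → S → Prop) : Prop :=
  Equivalence r ∧ ∀ s t : S, r s t → ∀ z : List Alph, r (run δ s z) (run δ t z)

/-- The congruence `π` : `s π t` iff `sx = tx` for every `[x]_A ∈ I(A)`. -/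
def piRel {S Alph : Type*} (δ : S → Alph → S) (s t : S) : Prop :=
  ∀ x : List Alph, InMinIdeal δ x → run δ s x = run δ t x

/-- The congruence `ρ` : `s ρ t` iff `s, t ∈ Im_A(e)` for some `[e]_A ∈ E(A)`. -/
def rhoRel {S Alph : Type*} (δ : S → Alph → S) (s t : S) : Prop :=
  ∃ e : List Alph, IdemMin δ e ∧ s ∈ Im δ e ∧ t ∈ Im δ e

/-! The graph `{(s, α s)}` of a homomorphism `α` is closed under the action of `A × B`. It is
nonempty, and since `B` has a state other than `α s`, it is not all of `S × T`; so no word leads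
from `(s, α s)` to `(s, t)` with `t ≠ α s`. -/

theorem run_prodStep {S T Alph : Type*} (δ : S → Alph → S) (γ : T → Alph → T)
    (p : S × T) (x : List Alph) :
    run (prodStep δ γ) p x = (run δ p.1 x, run γ p.2 x) := by
  induction x generalizing p with
  | nil => rfl
  | cons a x ih => exact ih (prodStep δ γ p a)

theorem StronglyConnected.eq_univ_of_forall_run_mem {S Alph : Type*} {δ : S → Alph → S}
    (h : StronglyConnected δ) {P : Set S} (hP : ∀ s ∈ P, ∀ x, run δ s x ∈ P)
    (hne : P.Nonempty) : P = Set.univ := by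
  obtain ⟨s, hs⟩ := hne
  refine Set.eq_univ_of_forall fun t => ?_
  obtain ⟨x, rfl⟩ := h s t
  exact hP s hs x

theorem run_prodStep_mem_graph {S T Alph : Type*} {δ : S → Alph → S} {γ : T → Alph → T}
    {α : S → T} (hα : ∀ (s : S) (x : List Alph), α (run δ s x) = run γ (α s) x)
    (p : S × T) (hp : p.2 = α p.1) (x : List Alph) :
    (run (prodStep δ γ) p x).2 = α (run (prodStep δ γ) p x).1 := by
  rw [run_prodStep, hα, hp]

theorem stmt0_general {S T Alph : Type*} [Nontrivial S] [Nontrivial T]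
    (δ : S → Alph → S) (γ : T → Alph → T) (α : S → T)
    (hα : ∀ (s : S) (x : List Alph), α (run δ s x) = run γ (α s) x) :
    ¬ StronglyConnected (prodStep δ γ) := by
  intro h
  obtain ⟨s⟩ := ‹Nontrivial S›.to_nonempty
  obtain ⟨t, ht⟩ := exists_ne (α s)
  have graph_eq_univ : {p : S × T | p.2 = α p.1} = Set.univ :=
    h.eq_univ_of_forall_run_mem (run_prodStep_mem_graph hα) ⟨(s, α s), rfl⟩
  have hst : (s, t) ∈ {p : S × T | p.2 = α p.1} := graph_eq_univ ▸ Set.mem_univ _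
  exact ht hst

/-- Fleck: if there is a homomorphism between nontrivial automata `A` and `B`,
then `A × B` is not strongly connected. -/
theorem stmt0 {S T Alph : Type*} [Finite S] [Finite T] [Nontrivial S] [Nontrivial T]
    (δ : S → Alph → S) (γ : T → Alph → T) (α : S → T)
    (hα : ∀ (s : S) (x : List Alph), α (run δ s x) = run γ (α s) x) :
    ¬ StronglyConnected (prodStep δ γ) :=
  stmt0_general δ γ α hα
end

section
/- If A is a strongly connected finite automaton whose minimal transition ideal I(A) is a right group, then the state set S is the union of the ranges of the idempotent elements of I(A): S = ⋃_{[e]_A ∈ E(A)} Im_A(e). -/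

lemma run_append {S Alph : Type*} (δ : S → Alph → S) (s : S) (x y : List Alph) :
    run δ s (x ++ y) = run δ (run δ s x) y := List.foldl_append ..

lemma run_join_replicate {S Alph : Type*} (δ : S → Alph → S) (a : List Alph) :
    ∀ n (s : S), run δ s ((List.replicate n a).flatten) = (fun u => run δ u a)^[n] s := by
  intro n
  induction n with
  | zero => intro s; rfl
  | succ n ih =>
    intro s
    rw [List.replicate_succ, List.flatten_cons, run_append, Function.iterate_succ_apply, ih]

lemma rank_append_right {S Alph : Type*} [Finite S] (δ : S → Alph → S) (x y : List Alph) :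
    wordRank δ (x ++ y) ≤ wordRank δ y := by
  apply Set.ncard_le_ncard _ (Set.toFinite _)
  rintro t ⟨u, rfl⟩
  exact ⟨run δ u x, (run_append δ u x y).symm⟩

lemma exists_idem_iterate {S : Type*} [Finite S] (f : S → S) :
    ∃ n, 0 < n ∧ ∀ u, f^[n] (f^[n] u) = f^[n] u := by
  obtain ⟨m, n, hmn, heq⟩ : ∃ m n, m < n ∧ f^[m] = f^[n] := by
    obtain ⟨m, n, hne, heq⟩ :=
      Finite.exists_ne_map_eq_of_infinite (fun n : ℕ => f^[n])
    rcases lt_or_gt_of_ne hne with h | h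
    · exact ⟨m, n, h, heq⟩
    · exact ⟨n, m, h, heq.symm⟩
  have hstep : ∀ p, m ≤ p → f^[p + (n - m)] = f^[p] := by
    intro p hp
    have h1 : p + (n - m) = (p - m) + n := by omega
    rw [h1, Function.iterate_add, ← heq, ← Function.iterate_add, Nat.sub_add_cancel hp]
  have hmul : ∀ j p, m ≤ p → f^[p + j * (n - m)] = f^[p] := by
    intro j
    induction j with
    | zero => intro p hp; simp
    | succ j ih =>
      intro p hp
      have h3 : p + (j + 1) * (n - m) = (p + (n - m)) + j * (n - m) := by ring
      rw [h3, ih _ (le_trans hp (Nat.le_add_right _ _)), hstep p hp]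
  have hkpos : 0 < n - m := by omega
  refine ⟨(m + 1) * (n - m), by positivity, fun u => ?_⟩
  have h1 : f^[(m+1)*(n-m)] (f^[(m+1)*(n-m)] u) = f^[(m+1)*(n-m) + (m+1)*(n-m)] u := by
    rw [Function.iterate_add_apply]
  rw [h1, hmul (m+1) ((m+1)*(n-m)) (by nlinarith)]

lemma rank_append_left {S Alph : Type*} [Finite S] (δ : S → Alph → S) (x y : List Alph) :
    wordRank δ (x ++ y) ≤ wordRank δ x := by
  have him : Im δ (x ++ y) = (fun u => run δ u y) '' (Im δ x) := by
    ext t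
    constructor
    · rintro ⟨s, rfl⟩
      exact ⟨run δ s x, ⟨s, rfl⟩, (run_append δ s x y).symm⟩
    · rintro ⟨u, ⟨s, rfl⟩, rfl⟩
      exact ⟨s, run_append δ s x y⟩
  rw [wordRank, him]
  exact Set.ncard_image_le (Set.toFinite _)

/-- If `A` is strongly connected and `I(A)` is a right group, then
`S = ⋃_{[e]_A ∈ E(A)} Im_A(e)`. -/
theorem stmt5 {S Alph : Type*} [Finite S] (δ : S → Alph → S)
    (hsc : StronglyConnected δ) (hrg : RightGroupMin δ) :
    ∀ s : S, ∃ e : List Alph, IdemMin δ e ∧ s ∈ Im δ e := by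
  intro s
  obtain ⟨hrs, e0, he0⟩ := hrg
  obtain ⟨w, hw⟩ := hsc (run δ s e0) s
  set a := e0 ++ w with ha
  have hsa : run δ s a = s := by rw [ha, run_append, hw]
  have hane : a ≠ [] := by
    rw [ha]
    intro hcon
    rw [List.append_eq_nil_iff] at hcon
    exact he0.1.1 hcon.1
  have hamin : ∀ y : List Alph, y ≠ [] → wordRank δ a ≤ wordRank δ y := by
    intro y hy
    exact le_trans (rank_append_left δ e0 w) (he0.1.2 y hy)
  obtain ⟨n, hn, hidem⟩ := exists_idem_iterate (fun u => run δ u a)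
  refine ⟨(List.replicate n a).flatten, ⟨⟨?_, ?_⟩, ?_⟩, ?_⟩
  · cases n with
    | zero => omega
    | succ n => simp [List.replicate_succ, hane]
  · intro y hy
    refine le_trans ?_ (hamin y hy)
    obtain ⟨n, rfl⟩ : ∃ m, n = m + 1 := ⟨n - 1, by omega⟩
    have hsplit : (List.replicate (n+1) a).flatten = (List.replicate n a).flatten ++ a := by
      rw [List.replicate_succ']
      simp
    rw [hsplit]
    exact rank_append_right δ _ a
  · intro u
    simp only [run_append, run_join_replicate]
    exact hidem u
  · refine ⟨s, ?_⟩
    show run δ s _ = s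
    rw [run_join_replicate]
    exact Function.iterate_fixed hsa n
end

section
/- Let A be an automaton with automaton congruences π and ρ such that π ∩ ρ is the equality relation on S and the relational composition π ∘ ρ equals S × S. Then A is isomorphic to the direct product A/π × A/ρ via the map s ↦ ([s]_π, [s]_ρ). -/
/-- Single-letter transition on the quotient of the state set by a congruence. -/
def congStep {S Alph : Type*} (δ : S → Alph → S) (r : S → S → Prop)
    (h : ∀ s t : S, r s t → ∀ a : Alph, r (δ s a) (δ t a)) :
    Quot r → Alph → Quot r :=
  fun q a =>
    Quot.lift (fun s => Quot.mk r (δ s a))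
      (fun s t hst => Quot.sound (h s t hst a)) q

theorem run_hom {S T Alph : Type*} {δ : S → Alph → S} {γ : T → Alph → T} (f : S → T)
    (hf : ∀ s a, f (δ s a) = γ (f s) a) (s : S) (x : List Alph) :
    f (run δ s x) = run γ (f s) x :=
  (List.foldl_hom f fun s a => (hf s a).symm).symm

theorem quot_mk_prod_injective {S : Type*} {π ρ : S → S → Prop}
    (hπ : Equivalence π) (hρ : Equivalence ρ) (hcap : ∀ s t : S, π s t → ρ s t → s = t) :
    Function.Injective (fun s : S => (Quot.mk π s, Quot.mk ρ s)) := by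
  intro s t hst
  obtain ⟨hπst, hρst⟩ := Prod.mk.inj hst
  exact hcap s t ((hπ.quot_mk_eq_iff s t).mp hπst) ((hρ.quot_mk_eq_iff s t).mp hρst)

theorem quot_mk_prod_surjective {S : Type*} {π ρ : S → S → Prop}
    (hcomp : ∀ s t : S, ∃ u : S, π s u ∧ ρ u t) :
    Function.Surjective (fun s : S => (Quot.mk π s, Quot.mk ρ s)) := by
  rintro ⟨p, q⟩
  obtain ⟨s, rfl⟩ := Quot.exists_rep p
  obtain ⟨t, rfl⟩ := Quot.exists_rep q
  obtain ⟨u, hsu, hut⟩ := hcomp s t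
  exact ⟨u, Prod.ext (Quot.sound hsu).symm (Quot.sound hut)⟩

/-- If `π ∩ ρ = 1_S` and `π ∘ ρ = S × S` for automaton congruences `π, ρ`, then
`A ≅ A/π × A/ρ` via `s ↦ ([s]_π, [s]_ρ)`. -/
theorem stmt12 {S Alph : Type*} (δ : S → Alph → S) (π ρ : S → S → Prop)
    (hπ : AutCongruence δ π) (hρ : AutCongruence δ ρ)
    (hcap : ∀ s t : S, π s t → ρ s t → s = t)
    (hcomp : ∀ s t : S, ∃ u : S, π s u ∧ ρ u t) :
    Function.Bijective (fun s : S => (Quot.mk π s, Quot.mk ρ s)) ∧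
    ∀ (s : S) (x : List Alph),
      (Quot.mk π (run δ s x), Quot.mk ρ (run δ s x)) =
        run (prodStep (congStep δ π (fun s t h a => hπ.2 s t h [a]))
                      (congStep δ ρ (fun s t h a => hρ.2 s t h [a])))
            (Quot.mk π s, Quot.mk ρ s) x :=
  ⟨⟨quot_mk_prod_injective hπ.1 hρ.1 hcap, quot_mk_prod_surjective hcomp⟩,
    run_hom (fun s => (Quot.mk π s, Quot.mk ρ s)) fun _ _ => rfl⟩
end
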